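/- arXiv:2404.13291 — 5 statements merged into one kernel-verified Lean document; each statement's English description precedes it below -/
import Mathlib

section
/- Let F be a pricing function with marginal-rate function G and let f>0 be the unit trading fee. Fix α>0 and β>0 with G(β)/α < 1/(1+f). Then there exists a unique pair (d^A,d^B) with d^A ∈ (0,1) and d^B < 0 satisfying the system of equations (1−d^A)/(1−d^B) = (1/β)·G⁻¹(α/(1+f)) and F(β(1−d^A), 1−d^B) = F(β, 1), where G⁻¹ denotes the inverse function of G. -/
open Set Filter Topology

/-- A pricing function `F` with partial derivatives `Fx`, `Fy` and marginal-rate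
function `G` (with derivative `G'`), as in Assumption 1 (Pricing Formula):
(i) `F` is continuously differentiable with positive partial derivatives;
(ii) `Fx/Fy = G(x/y)` where `G` is continuously differentiable, strictly
decreasing (negative derivative), with `G → ∞` at `0⁺` and `G → 0` at `∞`;
(iii) homogeneity of level sets. -/
structure PricingFunction (F Fx Fy : ℝ → ℝ → ℝ) (G G' : ℝ → ℝ) : Prop where
  partialX : ∀ x y : ℝ, 0 < x → 0 < y → HasDerivAt (fun t => F t y) (Fx x y) x
  partialY : ∀ x y : ℝ, 0 < x → 0 < y → HasDerivAt (fun t => F x t) (Fy x y) y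
  contX : ContinuousOn (fun p : ℝ × ℝ => Fx p.1 p.2) (Ioi 0 ×ˢ Ioi 0)
  contY : ContinuousOn (fun p : ℝ × ℝ => Fy p.1 p.2) (Ioi 0 ×ˢ Ioi 0)
  posX : ∀ x y : ℝ, 0 < x → 0 < y → 0 < Fx x y
  posY : ∀ x y : ℝ, 0 < x → 0 < y → 0 < Fy x y
  ratio : ∀ x y : ℝ, 0 < x → 0 < y → Fx x y / Fy x y = G (x / y)
  derivG : ∀ z : ℝ, 0 < z → HasDerivAt G (G' z) z
  contG' : ContinuousOn G' (Ioi 0)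
  negG' : ∀ z : ℝ, 0 < z → G' z < 0
  tendstoG0 : Tendsto G (𝓝[>] (0:ℝ)) atTop
  tendstoGtop : Tendsto G atTop (𝓝 0)
  homog : ∀ x y x' y' c : ℝ, 0 < x → 0 < y → 0 < x' → 0 < y' → 0 < c →
    F x y = F x' y' → F (c * x) (c * y) = F (c * x') (c * y')

/-! The whole system reduces to one unknown: with `z = G⁻¹(α/(1+f))`, the pair is
`(1 - z t/β, 1 - t)` where `t` solves `F(z t, t) = F(β, 1)`. Since `F` increases in both
arguments, `t ↦ F(z t, t)` is strictly increasing, which gives uniqueness; it is continuous,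
and it lies below `F(β, 1)` at `t = 1` because `z < β` (as `G` is decreasing and
`G β < α/(1+f)`), and above it for large `t`, which gives existence. -/

theorem continuousOn_Icc_prod_of_hasDerivAt_fst {F Fx : ℝ → ℝ → ℝ} {a b : ℝ} {t : Set ℝ}
    (ht : IsCompact t)
    (hderiv : ∀ x ∈ Icc a b, ∀ y ∈ t, HasDerivAt (fun x => F x y) (Fx x y) x)
    (hFx : ContinuousOn (fun p : ℝ × ℝ => Fx p.1 p.2) (Icc a b ×ˢ t))
    (hcont : ∀ x ∈ Icc a b, ContinuousOn (F x) t) :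
    ContinuousOn (fun p : ℝ × ℝ => F p.1 p.2) (Icc a b ×ˢ t) := by
  obtain ⟨M, hM⟩ := (isCompact_Icc.prod ht).exists_bound_of_continuousOn hFx
  refine continuousOn_prod_of_continuousOn_lipschitzOnWith (fun p : ℝ × ℝ => F p.1 p.2)
    M.toNNReal hcont fun y hy => ?_
  refine Convex.lipschitzOnWith_of_nnnorm_hasDerivWithin_le (convex_Icc a b)
    (fun x hx => (hderiv x hx y hy).hasDerivWithinAt) fun x hx => ?_
  rw [← NNReal.coe_le_coe, coe_nnnorm]
  exact (hM (x, y) ⟨hx, hy⟩).trans (Real.le_coe_toNNReal M)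

namespace PricingFunction

variable {F Fx Fy : ℝ → ℝ → ℝ} {G G' : ℝ → ℝ}

theorem strictAntiOn_marginalRate (hF : PricingFunction F Fx Fy G G') : StrictAntiOn G (Ioi 0) :=
  strictAntiOn_of_hasDerivWithinAt_neg (convex_Ioi 0)
    (fun z hz => (hF.derivG z hz).continuousAt.continuousWithinAt)
    (fun z hz => (hF.derivG z (interior_subset hz)).hasDerivWithinAt)
    fun z hz => hF.negG' z (interior_subset hz)

theorem strictMonoOn_left (hF : PricingFunction F Fx Fy G G') {y : ℝ} (hy : 0 < y) :
    StrictMonoOn (fun x => F x y) (Ioi 0) :=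
  strictMonoOn_of_hasDerivWithinAt_pos (convex_Ioi 0)
    (fun x hx => (hF.partialX x y hx hy).continuousAt.continuousWithinAt)
    (fun x hx => (hF.partialX x y (interior_subset hx) hy).hasDerivWithinAt)
    fun x hx => hF.posX x y (interior_subset hx) hy

theorem strictMonoOn_right (hF : PricingFunction F Fx Fy G G') {x : ℝ} (hx : 0 < x) :
    StrictMonoOn (F x) (Ioi 0) :=
  strictMonoOn_of_hasDerivWithinAt_pos (convex_Ioi 0)
    (fun y hy => (hF.partialY x y hx hy).continuousAt.continuousWithinAt)
    (fun y hy => (hF.partialY x y hx (interior_subset hy)).hasDerivWithinAt)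
    fun y hy => hF.posY x y hx (interior_subset hy)

theorem strictMonoOn_ray (hF : PricingFunction F Fx Fy G G') {z : ℝ} (hz : 0 < z) :
    StrictMonoOn (fun t => F (z * t) t) (Ioi 0) := by
  intro s hs t ht hst
  have hzs : 0 < z * s := mul_pos hz hs
  have hzt : 0 < z * t := mul_pos hz ht
  calc F (z * s) s < F (z * t) s := hF.strictMonoOn_left hs hzs hzt (by gcongr)
    _ < F (z * t) t := hF.strictMonoOn_right hzt hs ht hst

theorem continuousOn_ray (hF : PricingFunction F Fx Fy G G') {z a b : ℝ} (hz : 0 < z)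
    (ha : 0 < a) : ContinuousOn (fun t => F (z * t) t) (Icc a b) := by
  have hpos : ∀ x ∈ Icc (z * a) (z * b), ∀ y ∈ Icc a b, 0 < x ∧ 0 < y := fun x hx y hy =>
    ⟨(mul_pos hz ha).trans_le hx.1, ha.trans_le hy.1⟩
  have hF2 : ContinuousOn (fun p : ℝ × ℝ => F p.1 p.2) (Icc (z * a) (z * b) ×ˢ Icc a b) :=
    continuousOn_Icc_prod_of_hasDerivAt_fst isCompact_Icc
      (fun x hx y hy => hF.partialX x y (hpos x hx y hy).1 (hpos x hx y hy).2)
      (hF.contX.mono fun p hp => hpos p.1 hp.1 p.2 hp.2)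
      fun x hx y hy =>
        (hF.partialY x y (hpos x hx y hy).1 (hpos x hx y hy).2).continuousAt.continuousWithinAt
  refine hF2.comp ((continuous_const.mul continuous_id).prodMk continuous_id).continuousOn ?_
  exact fun t ht =>
    ⟨⟨mul_le_mul_of_nonneg_left ht.1 hz.le, mul_le_mul_of_nonneg_left ht.2 hz.le⟩, ht⟩

theorem existsUnique_ray_eq (hF : PricingFunction F Fx Fy G G') {x y z : ℝ} (hz : 0 < z)
    (hy : 0 < y) (hzy : z * y < x) :
    ∃ t, (y < t ∧ z * t < x ∧ F (z * t) t = F x y) ∧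
      ∀ t', 0 < t' → F (z * t') t' = F x y → t' = t := by
  have hx : 0 < x := (mul_pos hz hy).trans hzy
  set T := x / z + y
  have hyT : y < T := by have := div_pos hx hz; linarith
  have hT : 0 < T := hy.trans hyT
  have hzT : x < z * T := by
    have : z * T = x + z * y := by rw [mul_add, mul_div_cancel₀ x hz.ne']
    linarith [mul_pos hz hy]
  have hlow : F (z * y) y < F x y := hF.strictMonoOn_left hy (mul_pos hz hy) hx hzy
  have hhigh : F x y < F (z * T) T :=
    (hF.strictMonoOn_right hx hy hT hyT).trans (hF.strictMonoOn_left hT hx (mul_pos hz hT) hzT)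
  obtain ⟨t, ⟨hyt, -⟩, hFt⟩ :=
    intermediate_value_Ioo hyT.le (hF.continuousOn_ray hz hy) ⟨hlow, hhigh⟩
  have ht : 0 < t := hy.trans hyt
  replace hFt : F (z * t) t = F x y := hFt
  have hzt : z * t < x := by
    refine ((hF.strictMonoOn_left ht).lt_iff_lt (mul_pos hz ht) hx).mp ?_
    rw [hFt]
    exact hF.strictMonoOn_right hx hy ht hyt
  refine ⟨t, ⟨hyt, hzt, hFt⟩, fun t' ht' hFt' => ?_⟩
  exact (hF.strictMonoOn_ray hz).injOn ht' ht (hFt'.trans hFt.symm)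

end PricingFunction

/-- Proposition 1(i), first case: if `G(β)/α < 1/(1+f)`, the system
`(1−dᴬ)/(1−dᴮ) = (1/β)·G⁻¹(α/(1+f))`, `F(β(1−dᴬ), 1−dᴮ) = F(β,1)` admits a
unique solution with `dᴬ ∈ (0,1)` and `dᴮ < 0`. -/
theorem stmt0 (F Fx Fy : ℝ → ℝ → ℝ) (G G' Ginv : ℝ → ℝ)
    (hF : PricingFunction F Fx Fy G G')
    (hGinv : ∀ u : ℝ, 0 < u → 0 < Ginv u ∧ G (Ginv u) = u)
    (f : ℝ) (hf : 0 < f) (α β : ℝ) (hα : 0 < α) (hβ : 0 < β)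
    (hreg : G β / α < 1 / (1 + f)) :
    ∃! d : ℝ × ℝ, d.1 ∈ Ioo (0:ℝ) 1 ∧ d.2 < 0 ∧
      (1 - d.1) / (1 - d.2) = (1 / β) * Ginv (α / (1 + f)) ∧
      F (β * (1 - d.1)) (1 - d.2) = F β 1 := by
  have hf₁ : 0 < 1 + f := by linarith
  obtain ⟨hz, hGz⟩ := hGinv _ (div_pos hα hf₁)
  set z := Ginv (α / (1 + f))
  have hGβ : G β < G z := by
    rw [hGz, lt_div_iff₀ hf₁]
    rw [div_lt_div_iff₀ hα hf₁] at hreg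
    linarith
  have hzβ : z < β := (hF.strictAntiOn_marginalRate.lt_iff_gt hβ hz).mp hGβ
  obtain ⟨t, ⟨h1t, hzt, hFt⟩, huniq⟩ :=
    hF.existsUnique_ray_eq hz one_pos (by rwa [mul_one])
  have ht : t ≠ 0 := (one_pos.trans h1t).ne'
  refine ⟨(1 - z * t / β, 1 - t), ⟨⟨?_, ?_⟩, by linarith, ?_, ?_⟩, ?_⟩
  · linarith [(div_lt_one hβ).mpr hzt]
  · linarith [div_pos (mul_pos hz (one_pos.trans h1t)) hβ]
  · simp only [sub_sub_cancel]; field_simp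
  · rwa [sub_sub_cancel, sub_sub_cancel, mul_div_cancel₀ _ hβ.ne']
  rintro ⟨d₁, d₂⟩ ⟨-, hd₂, hratio, hlevel⟩
  have hsplit : β * (1 - d₁) = z * (1 - d₂) := by
    rw [div_eq_iff (by linarith)] at hratio
    field_simp at hratio
    linarith
  have hd₂t : 1 - d₂ = t := huniq _ (by linarith) (by rwa [← hsplit])
  refine Prod.ext ?_ (by simp only; linarith)
  rw [← hd₂t, ← hsplit, mul_div_cancel_left₀ _ hβ.ne', sub_sub_cancel]
end

section
/- Let F be a pricing function with marginal-rate function G, let f>0 be the unit trading fee, and let a,b,y^A,y^B > 0 with G(y^A/y^B)/(a/b) < 1/(1+f). Then the investor's problem admits a unique optimal solution (D̂^A, D̂^B), given by D̂^A = φ^A(a/b, y^A/y^B)·y^A and D̂^B = φ^B(a/b, y^A/y^B)·y^B; in particular D̂^A > 0, D̂^B < 0, and the optimal objective value is strictly positive. -/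
/-! The optimal pool state `(x̂, ŷ) = (yᴬ - D̂ᴬ, yᴮ - D̂ᴮ)` is where the marginal rate `G(x̂/ŷ)`
equals `k = a/(b(1+f))`. Along the line `y = ŷ + k(x̂ - x)` the derivative of `F` is
`F_y · (G(x/y) - k)`, which changes sign exactly at `x̂` because `G` is decreasing, so `F` has a
strict maximum there on that line. As `F` is increasing in `y`, the level curve through `(x̂, ŷ)`
lies strictly above its tangent line: `k x̂ + ŷ < k x + y` at every other point of the curve.
Fees only lower the objective, so it is at most `a Dᴬ + b(1+f) Dᴮ`, with equality at the optimum
where `D̂ᴬ > 0 > D̂ᴮ`; in pool coordinates this linear bound is a constant minus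
`b(1+f)(k x + y)`. Comparing with the no-trade point `(0, 0)` gives a positive optimal value. -/

open Set Filter Topology

/-- The investor's post-fee profit `a(1+f·1_{Dᴬ<0})Dᴬ + b(1+f·1_{Dᴮ<0})Dᴮ`. -/
noncomputable def objective (f a b DA DB : ℝ) : ℝ :=
  a * (if DA < 0 then 1 + f else 1) * DA + b * (if DB < 0 then 1 + f else 1) * DB

theorem objective_le {f a b : ℝ} (hf : 0 ≤ f) (ha : 0 ≤ a) (hb : 0 ≤ b) (DA DB : ℝ) :
    objective f a b DA DB ≤ a * DA + b * (1 + f) * DB := by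
  unfold objective
  split_ifs with hA hB hB
  · nlinarith [mul_nonneg ha hf]
  · nlinarith [mul_nonneg ha hf, mul_nonneg hb hf]
  · nlinarith
  · nlinarith [mul_nonneg hb hf]

theorem objective_of_nonneg_of_neg (f a b : ℝ) {DA DB : ℝ} (hA : 0 ≤ DA) (hB : DB < 0) :
    objective f a b DA DB = a * DA + b * (1 + f) * DB := by
  simp [objective, hA.not_gt, hB]

namespace PricingFunction

variable {F Fx Fy : ℝ → ℝ → ℝ} {G G' : ℝ → ℝ}

open ContinuousLinearMap in
theorem hasFDerivAt_uncurry (hF : PricingFunction F Fx Fy G G') {x y : ℝ}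
    (hx : 0 < x) (hy : 0 < y) :
    HasFDerivAt (Function.uncurry F)
      ((toSpanSingleton ℝ (Fx x y)).coprod (toSpanSingleton ℝ (Fy x y))) (x, y) := by
  have hquad : Ioi (0:ℝ) ×ˢ Ioi 0 ∈ 𝓝 (x, y) :=
    prod_mem_nhds (Ioi_mem_nhds hx) (Ioi_mem_nhds hy)
  refine (hasStrictFDerivAt_uncurry_coprod (u := (x, y)) (f := F)
    (f₁ := fun x y => toSpanSingleton ℝ (Fx x y)) (f₂ := fun x y => toSpanSingleton ℝ (Fy x y))
    ?_ ?_ ?_ ?_).hasFDerivAt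
  · filter_upwards [hquad] with p hp using hF.partialX p.1 p.2 hp.1 hp.2
  · filter_upwards [hquad] with p hp using hF.partialY p.1 p.2 hp.1 hp.2
  · exact (toSpanSingletonCLE (𝕜 := ℝ) (E := ℝ)).continuous.continuousAt.comp
      (hF.contX.continuousAt hquad)
  · exact (toSpanSingletonCLE (𝕜 := ℝ) (E := ℝ)).continuous.continuousAt.comp
      (hF.contY.continuousAt hquad)

theorem hasDerivAt_comp (hF : PricingFunction F Fx Fy G G') {p q : ℝ → ℝ} {p' q' t : ℝ}
    (hp : HasDerivAt p p' t) (hq : HasDerivAt q q' t) (hpt : 0 < p t) (hqt : 0 < q t) :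
    HasDerivAt (fun s => F (p s) (q s)) (Fx (p t) (q t) * p' + Fy (p t) (q t) * q') t := by
  have h := (hF.hasFDerivAt_uncurry hpt hqt).comp_hasDerivAt t (hp.prodMk hq)
  exact h.congr_deriv (by simp [mul_comm])

theorem marginalRate_pos (hF : PricingFunction F Fx Fy G G') {z : ℝ} (hz : 0 < z) : 0 < G z := by
  have h := hF.ratio z 1 hz one_pos
  rw [div_one] at h
  exact h ▸ div_pos (hF.posX z 1 hz one_pos) (hF.posY z 1 hz one_pos)

theorem hasDerivAt_along_line (hF : PricingFunction F Fx Fy G G') {k xh yh t : ℝ} (ht : 0 < t)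
    (hl : 0 < yh + k * (xh - t)) :
    HasDerivAt (fun s => F s (yh + k * (xh - s)))
      (Fy t (yh + k * (xh - t)) * (G (t / (yh + k * (xh - t))) - k)) t := by
  have hline : HasDerivAt (fun s => yh + k * (xh - s)) (-k) t := by
    simpa using (((hasDerivAt_id t).const_sub xh).const_mul k).const_add yh
  refine (hF.hasDerivAt_comp (hasDerivAt_id t) hline ht hl).congr_deriv ?_
  rw [← hF.ratio t _ ht hl]
  field_simp [(hF.posY t _ ht hl).ne']
  simp only [id]
  ring

theorem lt_marginalRate_along_line (hF : PricingFunction F Fx Fy G G') {k xh yh s : ℝ}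
    (hxh : 0 < xh) (hyh : 0 < yh) (hk : G (xh / yh) = k) (hs : 0 < s)
    (hl : 0 < yh + k * (xh - s)) (hlt : s < xh) :
    k < G (s / (yh + k * (xh - s))) := by
  have hk0 : 0 < k := hk ▸ hF.marginalRate_pos (div_pos hxh hyh)
  have hratio : s / (yh + k * (xh - s)) < xh / yh := by
    rw [div_lt_div_iff₀ hl hyh]
    nlinarith [mul_pos (mul_pos hk0 hxh) (sub_pos.2 hlt), mul_lt_mul_of_pos_right hlt hyh]
  exact hk.symm.trans_lt (hF.strictAntiOn_marginalRate (div_pos hs hl) (div_pos hxh hyh) hratio)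

theorem marginalRate_along_line_lt (hF : PricingFunction F Fx Fy G G') {k xh yh s : ℝ}
    (hxh : 0 < xh) (hyh : 0 < yh) (hk : G (xh / yh) = k) (hs : 0 < s)
    (hl : 0 < yh + k * (xh - s)) (hlt : xh < s) :
    G (s / (yh + k * (xh - s))) < k := by
  have hk0 : 0 < k := hk ▸ hF.marginalRate_pos (div_pos hxh hyh)
  have hratio : xh / yh < s / (yh + k * (xh - s)) := by
    rw [div_lt_div_iff₀ hyh hl]
    nlinarith [mul_pos (mul_pos hk0 hxh) (sub_pos.2 hlt), mul_lt_mul_of_pos_right hlt hyh]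
  exact (hF.strictAntiOn_marginalRate (div_pos hxh hyh) (div_pos hs hl) hratio).trans_eq hk

theorem apply_lt_of_mem_tangentLine (hF : PricingFunction F Fx Fy G G') {k xh yh t : ℝ}
    (hxh : 0 < xh) (hyh : 0 < yh) (hk : G (xh / yh) = k) (ht : 0 < t)
    (hl : 0 < yh + k * (xh - t)) (hne : t ≠ xh) :
    F t (yh + k * (xh - t)) < F xh yh := by
  have hk0 : 0 < k := hk ▸ hF.marginalRate_pos (div_pos hxh hyh)
  set φ := fun s => F s (yh + k * (xh - s))
  have hφxh : φ xh = F xh yh := by simp [φ]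
  have hpos : ∀ s ∈ uIcc t xh, 0 < s ∧ 0 < yh + k * (xh - s) := by
    intro s hs
    rcases le_total t xh with h | h
    · rw [uIcc_of_le h] at hs
      exact ⟨ht.trans_le hs.1, by nlinarith [hs.2]⟩
    · rw [uIcc_of_ge h] at hs
      exact ⟨hxh.trans_le hs.1, by nlinarith [hs.2]⟩
  have hderiv : ∀ s ∈ uIcc t xh, HasDerivAt φ
      (Fy s (yh + k * (xh - s)) * (G (s / (yh + k * (xh - s))) - k)) s :=
    fun s hs => hF.hasDerivAt_along_line (hpos s hs).1 (hpos s hs).2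
  have hcont : ContinuousOn φ (uIcc t xh) :=
    fun s hs => (hderiv s hs).continuousAt.continuousWithinAt
  rcases hne.lt_or_gt with hlt | hlt
  · rw [uIcc_of_le hlt.le] at hpos hderiv hcont
    have hmono : StrictMonoOn φ (Icc t xh) := by
      refine strictMonoOn_of_hasDerivWithinAt_pos (convex_Icc _ _) hcont
        (fun s hs => (hderiv s (interior_subset hs)).hasDerivWithinAt) ?_
      intro s hs
      rw [interior_Icc] at hs
      obtain ⟨hs0, hls⟩ := hpos s (Ioo_subset_Icc_self hs)
      exact mul_pos (hF.posY s _ hs0 hls)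
        (sub_pos.2 (hF.lt_marginalRate_along_line hxh hyh hk hs0 hls hs.2))
    exact hφxh ▸ hmono (left_mem_Icc.2 hlt.le) (right_mem_Icc.2 hlt.le) hlt
  · rw [uIcc_of_ge hlt.le] at hpos hderiv hcont
    have hanti : StrictAntiOn φ (Icc xh t) := by
      refine strictAntiOn_of_hasDerivWithinAt_neg (convex_Icc _ _) hcont
        (fun s hs => (hderiv s (interior_subset hs)).hasDerivWithinAt) ?_
      intro s hs
      rw [interior_Icc] at hs
      obtain ⟨hs0, hls⟩ := hpos s (Ioo_subset_Icc_self hs)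
      exact mul_neg_of_pos_of_neg (hF.posY s _ hs0 hls)
        (sub_neg.2 (hF.marginalRate_along_line_lt hxh hyh hk hs0 hls hs.1))
    exact hφxh ▸ hanti (left_mem_Icc.2 hlt.le) (right_mem_Icc.2 hlt.le) hlt

theorem tangent_lt_of_apply_eq (hF : PricingFunction F Fx Fy G G') {k xh yh x y : ℝ}
    (hxh : 0 < xh) (hyh : 0 < yh) (hk : G (xh / yh) = k) (hx : 0 < x) (hy : 0 < y)
    (hFeq : F x y = F xh yh) (hne : (x, y) ≠ (xh, yh)) :
    k * xh + yh < k * x + y := by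
  by_contra! hle
  have hy_le : y ≤ yh + k * (xh - x) := by linarith
  rcases eq_or_ne x xh with rfl | hx_ne
  · have hy_lt : y < yh := lt_of_le_of_ne (by linarith) fun h => hne (by rw [h])
    exact (hF.strictMonoOn_right hx hy hyh hy_lt).ne hFeq
  · have hl : 0 < yh + k * (xh - x) := hy.trans_le hy_le
    have h₁ := hF.apply_lt_of_mem_tangentLine hxh hyh hk hx hl hx_ne
    have h₂ := (hF.strictMonoOn_right hx).monotoneOn hy hl hy_le
    linarith

theorem apply_mul_eq_of_apply_div_mul_eq (hF : PricingFunction F Fx Fy G G') {x y s t : ℝ}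
    (hx : 0 < x) (hy : 0 < y) (hs : 0 < s) (ht : 0 < t)
    (h : F (x / y * s) t = F (x / y) 1) :
    F (x * s) (y * t) = F x y := by
  have := hF.homog _ _ _ _ y (by positivity) ht (by positivity) one_pos hy h
  rwa [← mul_assoc, mul_div_cancel₀ _ hy.ne', mul_one] at this

theorem objective_lt_of_marginalRate_eq
    (hF : PricingFunction F Fx Fy G G') {f a b yA yB DhA DhB DA DB : ℝ} (hf : 0 ≤ f)
    (ha : 0 < a) (hb : 0 < b) (hhA : 0 ≤ DhA) (hhB : DhB < 0) (hxh : 0 < yA - DhA)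
    (hyh : 0 < yB - DhB) (hG : G ((yA - DhA) / (yB - DhB)) = a / b / (1 + f))
    (hx : 0 < yA - DA) (hy : 0 < yB - DB)
    (hlevel : F (yA - DA) (yB - DB) = F (yA - DhA) (yB - DhB)) (hne : (DA, DB) ≠ (DhA, DhB)) :
    objective f a b DA DB < objective f a b DhA DhB := by
  have htan := hF.tangent_lt_of_apply_eq hxh hyh hG hx hy hlevel (by simpa using hne)
  have hbf : 0 < b * (1 + f) := by positivity
  have ha_eq : a = a / b / (1 + f) * (b * (1 + f)) := by field_simp
  rw [objective_of_nonneg_of_neg f a b hhA hhB]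
  calc objective f a b DA DB ≤ a * DA + b * (1 + f) * DB := objective_le hf ha.le hb.le DA DB
    _ < a * DhA + b * (1 + f) * DhB := by
      rw [ha_eq]
      nlinarith [mul_lt_mul_of_pos_right htan hbf]

end PricingFunction

/-- Proposition 1(ii), first case: if `G(yᴬ/yᴮ)/(a/b) < 1/(1+f)`, the investor's
problem admits the unique optimal solution `D̂ⁱ = φⁱ(a/b, yᴬ/yᴮ)·yⁱ`, which is
feasible, has `D̂ᴬ > 0 > D̂ᴮ`, and strictly positive objective value. -/
theorem stmt6 (F Fx Fy : ℝ → ℝ → ℝ) (G G' Ginv : ℝ → ℝ)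
    (hF : PricingFunction F Fx Fy G G')
    (hGinv : ∀ u : ℝ, 0 < u → 0 < Ginv u ∧ G (Ginv u) = u)
    (f : ℝ) (hf : 0 < f)
    (φA φB : ℝ → ℝ → ℝ)
    (hφ : ∀ α β : ℝ, 0 < α → 0 < β → G β / α < 1 / (1 + f) →
      φA α β ∈ Ioo (0:ℝ) 1 ∧ φB α β < 0 ∧
      (1 - φA α β) / (1 - φB α β) = (1 / β) * Ginv (α / (1 + f)) ∧
      F (β * (1 - φA α β)) (1 - φB α β) = F β 1)
    (a b yA yB : ℝ) (ha : 0 < a) (hb : 0 < b) (hyA : 0 < yA) (hyB : 0 < yB)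
    (hreg : G (yA / yB) / (a / b) < 1 / (1 + f)) :
    let DhatA := φA (a / b) (yA / yB) * yA
    let DhatB := φB (a / b) (yA / yB) * yB
    (F (yA - DhatA) (yB - DhatB) = F yA yB ∧ 0 < yA - DhatA ∧ 0 < yB - DhatB) ∧
    0 < DhatA ∧ DhatB < 0 ∧ 0 < objective f a b DhatA DhatB ∧
    ∀ DA DB : ℝ, F (yA - DA) (yB - DB) = F yA yB →
      0 < yA - DA → 0 < yB - DB → (DA, DB) ≠ (DhatA, DhatB) →
      objective f a b DA DB < objective f a b DhatA DhatB := by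
  intro DhatA DhatB
  obtain ⟨⟨hpA, hpA1⟩, hpB, hratio, hlevel⟩ :=
    hφ (a / b) (yA / yB) (div_pos ha hb) (div_pos hyA hyB) hreg
  have hDA : 0 < DhatA := mul_pos hpA hyA
  have hDB : DhatB < 0 := mul_neg_of_neg_of_pos hpB hyB
  have hxh : yA - DhatA = yA * (1 - φA (a / b) (yA / yB)) := by ring
  have hyh : yB - DhatB = yB * (1 - φB (a / b) (yA / yB)) := by ring
  have hxh_pos : 0 < yA - DhatA := hxh ▸ mul_pos hyA (by linarith)
  have hyh_pos : 0 < yB - DhatB := hyh ▸ mul_pos hyB (by linarith)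
  have hfeas : F (yA - DhatA) (yB - DhatB) = F yA yB := by
    rw [hxh, hyh]
    exact hF.apply_mul_eq_of_apply_div_mul_eq hyA hyB (by linarith) (by linarith) hlevel
  have hG : G ((yA - DhatA) / (yB - DhatB)) = a / b / (1 + f) := by
    rw [hxh, hyh, mul_div_mul_comm, hratio, ← mul_assoc,
      mul_one_div_cancel (div_pos hyA hyB).ne', one_mul]
    exact (hGinv _ (by positivity)).2
  have hopt : ∀ DA DB : ℝ, F (yA - DA) (yB - DB) = F yA yB →
      0 < yA - DA → 0 < yB - DB → (DA, DB) ≠ (DhatA, DhatB) →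
      objective f a b DA DB < objective f a b DhatA DhatB :=
    fun DA DB hlev hx hy hne => hF.objective_lt_of_marginalRate_eq hf.le ha hb hDA.le hDB
      hxh_pos hyh_pos hG hx hy (hlev.trans hfeas.symm) hne
  have hno_trade : objective f a b 0 0 < objective f a b DhatA DhatB :=
    hopt 0 0 (by simp) (by simpa) (by simpa) fun h => hDA.ne (congrArg Prod.fst h)
  refine ⟨⟨hfeas, hxh_pos, hyh_pos⟩, hDA, hDB, by simpa [objective] using hno_trade, hopt⟩
end

section
/- Let F be a pricing function with marginal-rate function G, let f>0 be the unit trading fee, and let α,β>0 satisfy G(β) ≥ α/(1+f). Then for every pair (d^A, d^B) with d^A ∈ (0,1), d^B < 1 and F(β(1−d^A), 1−d^B) = F(β, 1), one has αβ·d^A + (1+f)·d^B < 0; that is, acquiring any positive amount of asset A from the pool yields a strictly negative post-fee profit for an investor who values the exchange rate at α. -/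
open Set Filter Topology

/-!
Set `c = α / (1 + f) ≤ G β`. Along the segment from `(β, 1)` in direction `(-1, c)` the ratio
`x / y` drops below `β`, so the marginal rate `G (x / y) = F_x / F_y` stays strictly above `c` and
the directional derivative `c F_y - F_x` is negative. Hence
`F (β (1 - dᴬ)) (1 + c β dᴬ) < F β 1 = F (β (1 - dᴬ)) (1 - dᴮ)`, and since `F` is strictly
increasing in its second argument, `c β dᴬ < -dᴮ`; multiplying by `1 + f` gives the claim.
-/

namespace PricingFunction

variable {F Fx Fy : ℝ → ℝ → ℝ} {G G' : ℝ → ℝ}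

open ContinuousLinearMap in
theorem hasStrictFDerivAt_uncurry (hF : PricingFunction F Fx Fy G G')
    {x y : ℝ} (hx : 0 < x) (hy : 0 < y) :
    HasStrictFDerivAt (Function.uncurry F)
      ((toSpanSingleton ℝ (Fx x y)).coprod (toSpanSingleton ℝ (Fy x y))) (x, y) := by
  have hquad : Ioi (0 : ℝ) ×ˢ Ioi 0 ∈ 𝓝 (x, y) := prod_mem_nhds (Ioi_mem_nhds hx) (Ioi_mem_nhds hy)
  have hcont : ∀ {H : ℝ → ℝ → ℝ}, ContinuousOn (fun p : ℝ × ℝ => H p.1 p.2) (Ioi 0 ×ˢ Ioi 0) →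
      ContinuousAt (fun p : ℝ × ℝ => toSpanSingleton ℝ (H p.1 p.2)) (x, y) := fun h =>
    (toSpanSingletonCLE (𝕜 := ℝ) (E := ℝ)).continuous.continuousAt.comp (h.continuousAt hquad)
  refine hasStrictFDerivAt_uncurry_coprod (f₁ := fun x y => toSpanSingleton ℝ (Fx x y))
    (f₂ := fun x y => toSpanSingleton ℝ (Fy x y)) ?_ ?_ (hcont hF.contX) (hcont hF.contY)
  · filter_upwards [hquad] with p hp using (hF.partialX p.1 p.2 hp.1 hp.2).hasFDerivAt
  · filter_upwards [hquad] with p hp using (hF.partialY p.1 p.2 hp.1 hp.2).hasFDerivAt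

theorem hasDerivAt_comp_s9 (hF : PricingFunction F Fx Fy G G') {γ : ℝ → ℝ × ℝ} {γ' : ℝ × ℝ} {t : ℝ}
    (hγ : HasDerivAt γ γ' t) (hx : 0 < (γ t).1) (hy : 0 < (γ t).2) :
    HasDerivAt (fun s => F (γ s).1 (γ s).2)
      (γ'.1 * Fx (γ t).1 (γ t).2 + γ'.2 * Fy (γ t).1 (γ t).2) t := by
  have h := (hF.hasStrictFDerivAt_uncurry hx hy).hasFDerivAt.comp_hasDerivAt t hγ
  simp only [ContinuousLinearMap.coprod_apply, ContinuousLinearMap.toSpanSingleton_apply,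
    smul_eq_mul] at h
  exact h

theorem mul_partialY_lt_partialX (hF : PricingFunction F Fx Fy G G') {x y c : ℝ}
    (hx : 0 < x) (hy : 0 < y) (hc : c < G (x / y)) : c * Fy x y < Fx x y := by
  have hFy := hF.posY x y hx hy
  have hFx : Fx x y = G (x / y) * Fy x y := by
    rw [← hF.ratio x y hx hy, div_mul_cancel₀ _ hFy.ne']
  rw [hFx]
  exact mul_lt_mul_of_pos_right hc hFy

theorem apply_sub_add_mul_lt (hF : PricingFunction F Fx Fy G G') {x₀ y₀ c T : ℝ}
    (hx₀ : 0 < x₀) (hy₀ : 0 < y₀) (hc₀ : 0 ≤ c) (hc : c ≤ G (x₀ / y₀)) (hT : 0 < T)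
    (hTx : T < x₀) : F (x₀ - T) (y₀ + c * T) < F x₀ y₀ := by
  set γ : ℝ → ℝ × ℝ := fun s => (x₀ - s, y₀ + c * s)
  have hγ : ∀ s ∈ Icc 0 T, 0 < (γ s).1 ∧ 0 < (γ s).2 := fun s hs =>
    ⟨by simp only [γ]; linarith [hs.2], by simp only [γ]; nlinarith [hs.1]⟩
  have hγ' : ∀ s, HasDerivAt γ (-1, c) s := fun s => by
    simpa using ((hasDerivAt_id s).const_sub x₀).prodMk
      (((hasDerivAt_id s).const_mul c).const_add y₀)
  have hderiv : ∀ s ∈ Icc 0 T, HasDerivAt (fun s => F (γ s).1 (γ s).2)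
      (-1 * Fx (γ s).1 (γ s).2 + c * Fy (γ s).1 (γ s).2) s := fun s hs =>
    hF.hasDerivAt_comp_s9 (hγ' s) (hγ s hs).1 (hγ s hs).2
  have hanti : StrictAntiOn (fun s => F (γ s).1 (γ s).2) (Icc 0 T) := by
    refine strictAntiOn_of_hasDerivWithinAt_neg (convex_Icc 0 T)
      (fun s hs => (hderiv s hs).continuousAt.continuousWithinAt)
      (fun s hs => (hderiv s (interior_subset hs)).hasDerivWithinAt) fun s hs => ?_
    rw [interior_Icc] at hs
    obtain ⟨hx, hy⟩ := hγ s (Ioo_subset_Icc_self hs)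
    have hratio : (γ s).1 / (γ s).2 < x₀ / y₀ :=
      div_lt_div₀ (by simp only [γ]; linarith [hs.1]) (by simp only [γ]; nlinarith [hs.1])
        hx₀.le hy₀
    have := hF.mul_partialY_lt_partialX hx hy
      (hc.trans_lt (hF.strictAntiOn_marginalRate (div_pos hx hy) (div_pos hx₀ hy₀) hratio))
    linarith
  simpa [γ] using hanti (left_mem_Icc.2 hT.le) (right_mem_Icc.2 hT.le) hT

end PricingFunction

/-- If `G(β) ≥ α/(1+f)`, then acquiring any positive amount of asset A yields a
strictly negative post-fee profit: for any `dᴬ ∈ (0,1)`, `dᴮ < 1` with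
`F(β(1−dᴬ), 1−dᴮ) = F(β,1)`, one has `αβ·dᴬ + (1+f)·dᴮ < 0`. -/
theorem stmt9 (F Fx Fy : ℝ → ℝ → ℝ) (G G' : ℝ → ℝ)
    (hF : PricingFunction F Fx Fy G G')
    (f : ℝ) (hf : 0 < f) (α β : ℝ) (hα : 0 < α) (hβ : 0 < β)
    (hreg : α / (1 + f) ≤ G β) :
    ∀ dA dB : ℝ, dA ∈ Ioo (0:ℝ) 1 → dB < 1 →
      F (β * (1 - dA)) (1 - dB) = F β 1 →
      α * β * dA + (1 + f) * dB < 0 := by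
  rintro dA dB ⟨hdA₀, hdA₁⟩ hdB heq
  have hf₁ : 0 < 1 + f := by linarith
  set c := α / (1 + f)
  have hlt : F (β - β * dA) (1 + c * (β * dA)) < F β 1 :=
    hF.apply_sub_add_mul_lt hβ one_pos (by positivity) (by rwa [div_one])
      (by positivity) (by nlinarith)
  rw [← heq, show β - β * dA = β * (1 - dA) by ring] at hlt
  have hy : 1 + c * (β * dA) < 1 - dB :=
    (hF.strictMonoOn_right (mul_pos hβ (by linarith))).lt_iff_lt (mem_Ioi.2 (by positivity))
      (mem_Ioi.2 (by linarith)) |>.1 hlt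
  have hc : (1 + f) * c = α := mul_div_cancel₀ α hf₁.ne'
  calc α * β * dA + (1 + f) * dB = (1 + f) * (c * (β * dA) + dB) := by
        linear_combination -(β * dA) * hc
    _ < 0 := mul_neg_of_pos_of_neg hf₁ (by linarith)
end

section
/- Let η ∈ (0,1), f > 0, α,β > 0, and set s = η/((1−η)αβ). (a) If s < 1/(1+f), then (d^A, d^B) = (1 − (s(1+f))^{1−η}, 1 − (s(1+f))^{−η}) is the unique pair with d^A ∈ (0,1) and d^B < 0 satisfying (1−d^A)/(1−d^B) = η/((1−η)·β·(α/(1+f))) and (β(1−d^A))^η (1−d^B)^{1−η} = β^η. (b) If s > 1+f, then (d^A, d^B) = (1 − (s/(1+f))^{1−η}, 1 − (s/(1+f))^{−η}) is the unique pair with d^A < 0 and d^B ∈ (0,1) satisfying (1−d^A)/(1−d^B) = η/((1−η)·β·(α(1+f))) and (β(1−d^A))^η (1−d^B)^{1−η} = β^η. -/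
open Set Real

/-! With `t` the AMM rate corrected by the fee (`s(1+f)` when selling `A` to the pool, `s/(1+f)`
when buying it), the first-order condition reads `1-dᴬ = t(1-dᴮ)` and the pricing equation,
after cancelling `β^η`, reads `(1-dᴬ)^η (1-dᴮ)^(1-η) = 1`. Substituting the first into the second
gives `t^η (1-dᴮ) = 1`, so `1-dᴮ = t^(-η)` and `1-dᴬ = t^(1-η)` is the only solution; the signs
of `dᴬ` and `dᴮ` are then those of `1-t` and `t-1`. -/

theorem div_eq_and_rpow_mul_rpow_eq_one_iff (η : ℝ) {t a b : ℝ} (ht : 0 < t) (hb : 0 < b) :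
    a / b = t ∧ a ^ η * b ^ (1 - η) = 1 ↔ a = t ^ (1 - η) ∧ b = t ^ (-η) := by
  have htη : 0 < t ^ η := rpow_pos_of_pos ht η
  constructor
  · rintro ⟨hratio, hmean⟩
    obtain rfl : a = t * b := by rw [← hratio, div_mul_cancel₀ a hb.ne']
    have hb_eq : b = 1 / t ^ η := by
      rw [mul_rpow ht.le hb.le, mul_assoc, ← rpow_add hb, add_sub_cancel, rpow_one] at hmean
      field_simp
      linarith
    rw [rpow_sub ht, rpow_neg ht.le, rpow_one, hb_eq]
    constructor <;> field_simp
  · rintro ⟨rfl, rfl⟩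
    constructor
    · rw [← rpow_sub ht, sub_neg_eq_add, sub_add_cancel, rpow_one]
    · rw [← rpow_mul ht.le, ← rpow_mul ht.le, ← rpow_add ht]
      ring_nf
      exact rpow_zero t

theorem mul_rpow_mul_rpow_eq_rpow_iff {η β a : ℝ} (b : ℝ) (hβ : 0 < β) (ha : 0 ≤ a) :
    (β * a) ^ η * b ^ (1 - η) = β ^ η ↔ a ^ η * b ^ (1 - η) = 1 := by
  rw [mul_rpow hβ.le ha, mul_assoc]
  exact mul_eq_left₀ (rpow_pos_of_pos hβ η).ne'

theorem trade_fractions_iff {η β t dA dB : ℝ} (hβ : 0 < β) (ht : 0 < t) (hdA : dA < 1)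
    (hdB : dB < 1) :
    (1 - dA) / (1 - dB) = t ∧ (β * (1 - dA)) ^ η * (1 - dB) ^ (1 - η) = β ^ η ↔
      dA = 1 - t ^ (1 - η) ∧ dB = 1 - t ^ (-η) := by
  rw [mul_rpow_mul_rpow_eq_rpow_iff _ hβ (by linarith),
    div_eq_and_rpow_mul_rpow_eq_one_iff η ht (by linarith)]
  constructor <;> rintro ⟨hA, hB⟩ <;> constructor <;> linarith

section

variable {η β t : ℝ}

theorem trade_fractions_of_lt_one (hη : η ∈ Ioo (0 : ℝ) 1) (hβ : 0 < β) (ht0 : 0 < t)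
    (ht1 : t < 1) :
    1 - t ^ (1 - η) ∈ Ioo (0 : ℝ) 1 ∧ 1 - t ^ (-η) < 0 ∧
      (1 - (1 - t ^ (1 - η))) / (1 - (1 - t ^ (-η))) = t ∧
      (β * (1 - (1 - t ^ (1 - η)))) ^ η * (1 - (1 - t ^ (-η))) ^ (1 - η) = β ^ η ∧
      ∀ dA dB : ℝ, dA ∈ Ioo (0 : ℝ) 1 → dB < 0 → (1 - dA) / (1 - dB) = t →
        (β * (1 - dA)) ^ η * (1 - dB) ^ (1 - η) = β ^ η →
        dA = 1 - t ^ (1 - η) ∧ dB = 1 - t ^ (-η) := by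
  have hA0 : 0 < t ^ (1 - η) := rpow_pos_of_pos ht0 _
  have hA1 : t ^ (1 - η) < 1 := rpow_lt_one ht0.le ht1 (by linarith [hη.2])
  have hB : 1 < t ^ (-η) := one_lt_rpow_of_pos_of_lt_one_of_neg ht0 ht1 (by linarith [hη.1])
  have hsol := (trade_fractions_iff (η := η) hβ ht0 (by linarith) (by linarith)).2 ⟨rfl, rfl⟩
  refine ⟨⟨by linarith, by linarith⟩, by linarith, hsol.1, hsol.2, ?_⟩
  intro dA dB hdA hdB hratio hprice
  exact (trade_fractions_iff hβ ht0 hdA.2 (by linarith)).1 ⟨hratio, hprice⟩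

theorem trade_fractions_of_one_lt (hη : η ∈ Ioo (0 : ℝ) 1) (hβ : 0 < β) (ht : 1 < t) :
    1 - t ^ (1 - η) < 0 ∧ 1 - t ^ (-η) ∈ Ioo (0 : ℝ) 1 ∧
      (1 - (1 - t ^ (1 - η))) / (1 - (1 - t ^ (-η))) = t ∧
      (β * (1 - (1 - t ^ (1 - η)))) ^ η * (1 - (1 - t ^ (-η))) ^ (1 - η) = β ^ η ∧
      ∀ dA dB : ℝ, dA < 0 → dB ∈ Ioo (0 : ℝ) 1 → (1 - dA) / (1 - dB) = t →
        (β * (1 - dA)) ^ η * (1 - dB) ^ (1 - η) = β ^ η →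
        dA = 1 - t ^ (1 - η) ∧ dB = 1 - t ^ (-η) := by
  have ht0 : 0 < t := by linarith
  have hA : 1 < t ^ (1 - η) := one_lt_rpow ht (by linarith [hη.2])
  have hB0 : 0 < t ^ (-η) := rpow_pos_of_pos ht0 _
  have hB1 : t ^ (-η) < 1 := rpow_lt_one_of_one_lt_of_neg ht (by linarith [hη.1])
  have hsol := (trade_fractions_iff (η := η) hβ ht0 (by linarith) (by linarith)).2 ⟨rfl, rfl⟩
  refine ⟨by linarith, ⟨by linarith, by linarith⟩, hsol.1, hsol.2, ?_⟩
  intro dA dB hdA hdB hratio hprice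
  exact (trade_fractions_iff hβ ht0 (by linarith) hdB.2).1 ⟨hratio, hprice⟩

end

/-- Explicit optimal trading fractions for the CGMMM with weight `η`, fee `f`,
believed rate `α`, deposit ratio `β`, and `s = η/((1−η)αβ)`:
(a) if `s < 1/(1+f)`, the pair `(1−(s(1+f))^{1−η}, 1−(s(1+f))^{−η})` is the
unique pair with `dᴬ ∈ (0,1)`, `dᴮ < 0` solving the first-order and pricing
equations; (b) if `s > 1+f`, the pair `(1−(s/(1+f))^{1−η}, 1−(s/(1+f))^{−η})`
is the unique pair with `dᴬ < 0`, `dᴮ ∈ (0,1)` solving the corresponding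
equations. -/
theorem stmt14 (η f α β : ℝ) (hη : η ∈ Ioo (0:ℝ) 1) (hf : 0 < f)
    (hα : 0 < α) (hβ : 0 < β) :
    let s := η / ((1 - η) * α * β)
    ((s < 1 / (1 + f)) →
      let dA := 1 - (s * (1 + f)) ^ (1 - η)
      let dB := 1 - (s * (1 + f)) ^ (-η)
      dA ∈ Ioo (0:ℝ) 1 ∧ dB < 0 ∧
      (1 - dA) / (1 - dB) = η / ((1 - η) * β * (α / (1 + f))) ∧
      (β * (1 - dA)) ^ η * (1 - dB) ^ (1 - η) = β ^ η ∧
      (∀ dA' dB' : ℝ, dA' ∈ Ioo (0:ℝ) 1 → dB' < 0 →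
        (1 - dA') / (1 - dB') = η / ((1 - η) * β * (α / (1 + f))) →
        (β * (1 - dA')) ^ η * (1 - dB') ^ (1 - η) = β ^ η →
        dA' = dA ∧ dB' = dB)) ∧
    ((1 + f < s) →
      let dA := 1 - (s / (1 + f)) ^ (1 - η)
      let dB := 1 - (s / (1 + f)) ^ (-η)
      dA < 0 ∧ dB ∈ Ioo (0:ℝ) 1 ∧
      (1 - dA) / (1 - dB) = η / ((1 - η) * β * (α * (1 + f))) ∧
      (β * (1 - dA)) ^ η * (1 - dB) ^ (1 - η) = β ^ η ∧
      (∀ dA' dB' : ℝ, dA' < 0 → dB' ∈ Ioo (0:ℝ) 1 →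
        (1 - dA') / (1 - dB') = η / ((1 - η) * β * (α * (1 + f))) →
        (β * (1 - dA')) ^ η * (1 - dB') ^ (1 - η) = β ^ η →
        dA' = dA ∧ dB' = dB)) := by
  intro s
  have hη' : 0 < 1 - η := sub_pos.2 hη.2
  have hf1 : 0 < 1 + f := by linarith
  have hs : 0 < s := div_pos hη.1 (by positivity)
  refine ⟨fun hlt => ?_, fun hlt => ?_⟩
  · have ht1 : s * (1 + f) < 1 := (lt_div_iff₀ hf1).1 hlt
    have ht : s * (1 + f) = η / ((1 - η) * β * (α / (1 + f))) := by
      simp only [s]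
      field_simp
    exact ht ▸ trade_fractions_of_lt_one hη hβ (by positivity) ht1
  · have ht1 : 1 < s / (1 + f) := (one_lt_div hf1).2 hlt
    have ht : s / (1 + f) = η / ((1 - η) * β * (α * (1 + f))) := by
      simp only [s]
      field_simp
    exact ht ▸ trade_fractions_of_one_lt hη hβ ht1
end

section
/- Let η ∈ (0,1) and f > 0, and define H̄(s) = (1 + f(1 − (s(1+f))^η))/(1+f) for s ∈ (0, 1/(1+f)), and H̄(s) = (1+f)/(1 + f(1 − (s/(1+f))^{η−1})) for s > 1+f. Then: (a) for every s ∈ (0, 1/(1+f)), H̄(s) ∈ (1/(1+f), 1), and H̄ is strictly decreasing on (0, 1/(1+f)); (b) for every s > 1+f, H̄(s) ∈ (1, 1+f), and H̄ is strictly decreasing on (1+f, ∞). In particular, the post-trade exchange rate ratio always lies in the interior of the no-trading region [1/(1+f), 1+f], and it is strictly decreasing in the pre-trade ratio outside that region. -/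
/-!
Both branches of `H̄` factor as a monotone map of `t ∈ (0, 1)` after a power map of `s`.
Below the no-trading region `t = (s(1+f))^η` increases in `s`, and `H̄` is affine and decreasing
in `t`; above it `t = (s/(1+f))^(η-1)` decreases in `s`, and `(1+f)/(1+f(1-t))` increases in `t`.
On `t ∈ (0, 1)` the two outer maps take values in `(1/(1+f), 1)` and `(1, 1+f)` respectively.
-/

open Set Real

lemma rpow_mem_Ioo_zero_one_of_pos {x p : ℝ} (hx : x ∈ Ioo 0 1) (hp : 0 < p) :
    x ^ p ∈ Ioo 0 1 :=
  ⟨rpow_pos_of_pos hx.1 p, rpow_lt_one hx.1.le hx.2 hp⟩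

lemma rpow_mem_Ioo_zero_one_of_neg {x p : ℝ} (hx : 1 < x) (hp : p < 0) :
    x ^ p ∈ Ioo 0 1 :=
  ⟨rpow_pos_of_pos (zero_lt_one.trans hx) p, rpow_lt_one_of_one_lt_of_neg hx hp⟩

section PowerOfScaled

variable {c p : ℝ}

lemma mapsTo_rpow_mul_Ioo (hc : 0 < c) (hp : 0 < p) :
    MapsTo (fun s => (s * c) ^ p) (Ioo 0 (1 / c)) (Ioo 0 1) := fun _ hs =>
  rpow_mem_Ioo_zero_one_of_pos ⟨mul_pos hs.1 hc, (lt_div_iff₀ hc).mp hs.2⟩ hp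

lemma strictMonoOn_rpow_mul (hc : 0 < c) (hp : 0 < p) :
    StrictMonoOn (fun s => (s * c) ^ p) (Ici 0) :=
  (strictMonoOn_rpow_Ici_of_exponent_pos hp).comp
    ((strictMono_mul_right_of_pos hc).strictMonoOn _) fun _ hs => mul_nonneg hs hc.le

lemma mapsTo_rpow_div_Ioi (hc : 0 < c) (hp : p < 0) :
    MapsTo (fun s => (s / c) ^ p) (Ioi c) (Ioo 0 1) := fun _ hs =>
  rpow_mem_Ioo_zero_one_of_neg ((one_lt_div hc).mpr hs) hp

lemma strictAntiOn_rpow_div (hc : 0 < c) (hp : p < 0) :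
    StrictAntiOn (fun s => (s / c) ^ p) (Ioi 0) :=
  (strictAntiOn_rpow_Ioi_of_exponent_neg hp).comp_strictMonoOn
    ((strictMono_div_right_of_pos hc).strictMonoOn _) fun _ hs => div_pos hs hc

end PowerOfScaled

section FeeMaps

variable {f : ℝ}

lemma mapsTo_one_add_mul_one_sub_div (hf : 0 < f) :
    MapsTo (fun t => (1 + f * (1 - t)) / (1 + f)) (Ioo 0 1) (Ioo (1 / (1 + f)) 1) := by
  intro t ⟨ht0, ht1⟩
  have hf1 : 0 < 1 + f := by linarith
  exact ⟨(div_lt_div_iff_of_pos_right hf1).mpr (by nlinarith),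
    (div_lt_one hf1).mpr (by nlinarith)⟩

lemma strictAnti_one_add_mul_one_sub_div (hf : 0 < f) :
    StrictAnti fun t : ℝ => (1 + f * (1 - t)) / (1 + f) := by
  intro a b hab
  dsimp only
  gcongr

lemma mapsTo_div_one_add_mul_one_sub (hf : 0 < f) :
    MapsTo (fun t => (1 + f) / (1 + f * (1 - t))) (Ioo 0 1) (Ioo 1 (1 + f)) := by
  intro t ⟨ht0, ht1⟩
  have hden : 1 < 1 + f * (1 - t) := by nlinarith
  refine ⟨(one_lt_div (by linarith)).mpr (by nlinarith), ?_⟩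
  rw [div_lt_iff₀ (by linarith)]
  nlinarith

lemma strictMonoOn_div_one_add_mul_one_sub (hf : 0 < f) :
    StrictMonoOn (fun t => (1 + f) / (1 + f * (1 - t))) (Iic 1) := by
  intro a _ b hb hab
  have hden : 0 < 1 + f * (1 - b) := by nlinarith [mem_Iic.mp hb]
  exact div_lt_div_of_pos_left (by linarith) hden (by nlinarith)

end FeeMaps

/-- Properties of the CGMMM exchange-rate-ratio transition function `H̄` outside
the no-trading region: (a) on `(0, 1/(1+f))`, `H̄(s) ∈ (1/(1+f), 1)` and `H̄` is
strictly decreasing; (b) on `(1+f, ∞)`, `H̄(s) ∈ (1, 1+f)` and `H̄` is strictly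
decreasing. -/
theorem stmt15 (η f : ℝ) (hη : η ∈ Ioo (0:ℝ) 1) (hf : 0 < f) :
    let H₁ : ℝ → ℝ := fun s => (1 + f * (1 - (s * (1 + f)) ^ η)) / (1 + f)
    let H₂ : ℝ → ℝ := fun s => (1 + f) / (1 + f * (1 - (s / (1 + f)) ^ (η - 1)))
    (∀ s ∈ Ioo (0:ℝ) (1 / (1 + f)), H₁ s ∈ Ioo (1 / (1 + f)) 1) ∧
    StrictAntiOn H₁ (Ioo (0:ℝ) (1 / (1 + f))) ∧
    (∀ s ∈ Ioi (1 + f), H₂ s ∈ Ioo 1 (1 + f)) ∧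
    StrictAntiOn H₂ (Ioi (1 + f)) := by
  intro H₁ H₂
  have hf1 : (0:ℝ) < 1 + f := by linarith
  have hη1 : η - 1 < 0 := by linarith [hη.2]
  have below := mapsTo_rpow_mul_Ioo hf1 hη.1
  have above := mapsTo_rpow_div_Ioi hf1 hη1
  refine ⟨fun s hs => mapsTo_one_add_mul_one_sub_div hf (below hs), ?_,
    fun s hs => mapsTo_div_one_add_mul_one_sub hf (above hs), ?_⟩
  · exact (strictAnti_one_add_mul_one_sub_div hf).comp_strictMonoOn
      ((strictMonoOn_rpow_mul hf1 hη.1).mono fun _ hs => le_of_lt hs.1)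
  · exact (strictMonoOn_div_one_add_mul_one_sub hf).comp_strictAntiOn
      ((strictAntiOn_rpow_div hf1 hη1).mono fun _ hs => hf1.trans hs)
      (above.mono_right fun _ ht => le_of_lt ht.2)
end
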